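/- The alternating group A4 admits a symmetric subset S = {(13)(24), (14)(23), (123), (132)} such that the Cayley graph Cay(A4, S) has an irrational eigenvalue (namely (−1 ± √17)/2). -/

import Mathlib

/-!
If `u` is an eigenvector of the image of `∑ s ∈ S, s` in a permutation representation of `G`
on `α`, then `g ↦ u (g • a)` is an eigenvector, with the same eigenvalue, of the adjacency
matrix of `Cay(G, S)`. For `A₄` acting on four points the image of `∑ s ∈ S, s` is an explicit
integer matrix with characteristic polynomial `(x - 4)(x + 1)(x² + x - 4)`, so `Cay(A₄, S)`
has the irrational eigenvalue `(-1 + √17) / 2`.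
-/

open Classical in
/-- Adjacency matrix of the Cayley graph `Cay(G,S)`: `x ~ y` iff `x * y⁻¹ ∈ S`. -/
noncomputable def cayleyMatrix {G : Type*} [Group G] (S : Set G) : Matrix G G ℝ :=
  fun x y => if x * y⁻¹ ∈ S then 1 else 0

/-- All eigenvalues of the real matrix `A` are integers. -/
noncomputable def isIntegralMatrix {n : Type*} [Finite n] (A : Matrix n n ℝ) : Prop :=
  letI := Fintype.ofFinite n
  letI := Classical.decEq n
  ∀ μ : ℝ, Module.End.HasEigenvalue (Matrix.toLin' A) μ → ∃ z : ℤ, μ = (z : ℝ)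

open Finset Equiv Matrix

section

variable {G α : Type*} [Group G] [MulAction G α] [DecidableEq α]

theorem cayleyMatrix_mulVec_apply [Fintype G] [DecidableEq G] (T : Finset G) (f : G → ℝ)
    (x : G) : (cayleyMatrix (T : Set G) *ᵥ f) x = ∑ s ∈ T, f (s⁻¹ * x) :=
  calc (cayleyMatrix (T : Set G) *ᵥ f) x
      = ∑ y, if x * y⁻¹ ∈ T then f y else 0 := by
        simp only [mulVec, dotProduct, cayleyMatrix, mem_coe, ite_mul, one_mul, zero_mul]
    _ = ∑ s, if s ∈ T then f (s⁻¹ * x) else 0 :=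
        Fintype.sum_equiv ((Equiv.inv G).trans (Equiv.mulLeft x)) _ _ (fun y => by simp)
    _ = ∑ s ∈ T, f (s⁻¹ * x) := by rw [sum_ite_mem, univ_inter]

variable (α) in
/-- The matrix of `∑ s ∈ T, s` in the permutation representation on `α`: entry `(b, c)` counts
the `s ∈ T` with `s • c = b`. -/
def permRepSum (T : Finset G) : Matrix α α ℕ :=
  of fun b c => #{s ∈ T | s⁻¹ • b = c}

theorem sum_inv_smul_eq_permRepSum_mulVec [Fintype α] (T : Finset G) (u : α → ℝ) (b : α) :
    ∑ s ∈ T, u (s⁻¹ • b) = ((permRepSum α T).map (↑) *ᵥ u) b := by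
  rw [← sum_fiberwise T (fun s => s⁻¹ • b)]
  refine sum_congr rfl fun c _ => ?_
  rw [sum_congr rfl fun s hs => congrArg u (mem_filter.1 hs).2, sum_const, nsmul_eq_mul]
  rfl

theorem hasEigenvalue_cayleyMatrix_of_permRepSum [Fintype G] [DecidableEq G] [Fintype α]
    {T : Finset G} {μ : ℝ} {u : α → ℝ} {a : α}
    (hu : (permRepSum α T).map (↑) *ᵥ u = μ • u) (ha : u a ≠ 0) :
    Module.End.HasEigenvalue (toLin' (cayleyMatrix (T : Set G))) μ := by
  refine Module.End.hasEigenvalue_of_hasEigenvector (x := fun g => u (g • a)) ⟨?_, ?_⟩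
  · rw [Module.End.mem_eigenspace_iff, toLin'_apply]
    funext x
    simp only [cayleyMatrix_mulVec_apply, mul_smul, sum_inv_smul_eq_permRepSum_mulVec, hu]
    rfl
  · exact fun h => ha (by simpa using congrFun h 1)

end

def a4ConnectionSet : Finset (alternatingGroup (Fin 4)) :=
  {⟨swap 0 2 * swap 1 3, Perm.mem_alternatingGroup.2 (by decide)⟩,
    ⟨swap 0 3 * swap 1 2, Perm.mem_alternatingGroup.2 (by decide)⟩,
    ⟨swap 0 2 * swap 0 1, Perm.mem_alternatingGroup.2 (by decide)⟩,
    ⟨(swap 0 2 * swap 0 1)⁻¹, Perm.mem_alternatingGroup.2 (by decide)⟩}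

theorem permRepSum_a4ConnectionSet :
    permRepSum (Fin 4) a4ConnectionSet = !![0, 1, 2, 1; 1, 0, 2, 1; 2, 2, 0, 0; 1, 1, 0, 2] := by
  decide

theorem mulVec_eigenvector_of_sq_add_self_eq_four {μ : ℝ} (hμ : μ ^ 2 + μ = 4) :
    (!![0, 1, 2, 1; 1, 0, 2, 1; 2, 2, 0, 0; 1, 1, 0, 2] : Matrix (Fin 4) (Fin 4) ℕ).map (↑) *ᵥ
      ![4 - 3 * μ, 4 - 3 * μ, 4 * μ - 8, 2 * μ] = μ • ![4 - 3 * μ, 4 - 3 * μ, 4 * μ - 8, 2 * μ] := by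
  ext i
  fin_cases i <;> simp [mulVec, dotProduct, Fin.sum_univ_four] <;> linarith

theorem Nat.Prime.irrational_neg_one_add_sqrt_div_two {p : ℕ} (hp : p.Prime) :
    Irrational ((-1 + √p) / 2) := by
  have h : Irrational (((-1 : ℤ) + √p) / (2 : ℕ)) :=
    (hp.irrational_sqrt.intCast_add (-1)).div_natCast two_ne_zero
  convert h using 2 <;> norm_num

open Equiv in
theorem alternating_four_irrational_eigenvalue :
    ∃ S : Set (alternatingGroup (Fin 4)),
      (fun g : alternatingGroup (Fin 4) => (g : Perm (Fin 4))) '' S =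
        {swap 0 2 * swap 1 3, swap 0 3 * swap 1 2,
          swap 0 2 * swap 0 1, (swap 0 2 * swap 0 1)⁻¹} ∧
      (∀ s ∈ S, s⁻¹ ∈ S) ∧ (1 : alternatingGroup (Fin 4)) ∉ S ∧
      Irrational ((-1 + Real.sqrt 17) / 2) ∧
      Module.End.HasEigenvalue (Matrix.toLin' (cayleyMatrix S))
        ((-1 + Real.sqrt 17) / 2) := by
  set μ := (-1 + √17) / 2
  have hμ : μ ^ 2 + μ = 4 := by
    linear_combination (1 / 4 : ℝ) * Real.sq_sqrt (show (0 : ℝ) ≤ 17 by norm_num)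
  have hμ_ne : 2 * μ ≠ 0 := fun h => by norm_num [show μ = 0 by linarith] at hμ
  refine ⟨a4ConnectionSet, ?_, ?_, ?_, ?_, ?_⟩
  · simp only [a4ConnectionSet, coe_insert, coe_singleton, Set.image_insert_eq,
      Set.image_singleton]
  · simp only [mem_coe]
    decide
  · simp only [mem_coe]
    decide
  · simpa using (by norm_num : Nat.Prime 17).irrational_neg_one_add_sqrt_div_two
  · have hu := mulVec_eigenvector_of_sq_add_self_eq_four hμ
    rw [← permRepSum_a4ConnectionSet] at hu
    exact hasEigenvalue_cayleyMatrix_of_permRepSum hu (a := 3) hμ_ne
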